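/- Every proper subgroup of the binary icosahedral group has order at most 24. -/
import Mathlib

namespace BinIcoAux

abbrev G := Matrix.SpecialLinearGroup (Fin 2) (ZMod 5)

instance instDecEqG : DecidableEq G := fun a b => decidable_of_iff (a.1 = b.1) Subtype.ext_iff.symm

/-- an explicit element of order 4 (square is `-1`). -/
def s : G := ⟨!![0,1;4,0], by decide⟩

set_option maxRecDepth 2000000 in
lemma cardG : Nat.card G = 120 := by
  rw [Nat.card_eq_fintype_card]; decide

def S (k : ℕ) : Finset G := Finset.univ.filter (fun g : G => g ^ k = 1)

set_option maxRecDepth 2000000 in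
lemma cardS5 : (S 5).card = 25 := by decide

set_option maxRecDepth 2000000 in
lemma cardS15 : (S 15).card = 45 := by decide

set_option maxRecDepth 2000000 in
lemma cardS20 : (S 20).card = 80 := by decide

set_option maxRecDepth 2000000 in
lemma cardT : ((S 15) ∪ (S 15).image (fun g => s ^ 2 * g)).card = 90 := by decide

lemma card_perm_aux (α : Type*) [Finite α] :
    Nat.card (Equiv.Perm α) = Nat.factorial (Nat.card α) := by
  classical
  cases nonempty_fintype α
  simp [Nat.card_eq_fintype_card, Fintype.card_perm]

lemma card_le_of_subset {K : Subgroup G} {F : Finset G} (h : ∀ g ∈ F, g ∈ K) :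
    F.card ≤ Nat.card K := by
  have h1 : (↑F : Set G) ⊆ (K : Set G) := h
  have h2 := Set.ncard_le_ncard h1 (Set.toFinite _)
  rwa [Set.ncard_coe_finset, ← Nat.card_coe_set_eq] at h2

lemma mem_of_pow_eq_one {N : Subgroup G} [N.Normal] {k : ℕ}
    (hk : Nat.Coprime k N.index) {g : G} (hg : g ^ k = 1) : g ∈ N := by
  rw [← QuotientGroup.eq_one_iff]
  have h1 : ((g : G ⧸ N)) ^ k = 1 := by
    rw [show ((g : G ⧸ N)) = (QuotientGroup.mk' N) g from rfl, ← map_pow, hg, map_one]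
  have h2 : ((g : G ⧸ N)) ^ Nat.card (G ⧸ N) = 1 := pow_card_eq_one'
  have d1 : orderOf ((g : G ⧸ N)) ∣ k := orderOf_dvd_of_pow_eq_one h1
  have d2 : orderOf ((g : G ⧸ N)) ∣ Nat.card (G ⧸ N) := orderOf_dvd_of_pow_eq_one h2
  rw [← N.index_eq_card] at d2
  have h3 : orderOf ((g : G ⧸ N)) ∣ 1 := hk ▸ Nat.dvd_gcd d1 d2
  exact orderOf_eq_one_iff.mp (Nat.eq_one_of_dvd_one h3)

lemma core_case (N : Subgroup G) [N.Normal] (k c : ℕ) (hc : Nat.card N = c)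
    (hcop : Nat.Coprime k N.index) (hlt : c < (S k).card) : False := by
  have hsub : ∀ g ∈ S k, g ∈ N := by
    intro g hg
    rw [S, Finset.mem_filter] at hg
    exact mem_of_pow_eq_one hcop hg.2
  have := card_le_of_subset hsub
  omega

end BinIcoAux

open BinIcoAux in
/-- Every proper subgroup of the binary icosahedral group (realized as `SL(2, F₅)`)
has order at most 24. -/
theorem binaryIcosahedral_proper_subgroups
    (H : Subgroup (Matrix.SpecialLinearGroup (Fin 2) (ZMod 5))) (hH : H ≠ ⊤) :
    Nat.card H ≤ 24 := by
  by_contra hlt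
  push_neg at hlt
  have hdvd : Nat.card H ∣ 120 := cardG ▸ H.card_subgroup_dvd_card
  have hne : Nat.card H ≠ 120 := fun h => hH (H.eq_top_of_card_eq (h.trans cardG.symm))
  have hmul : Nat.card H * H.index = 120 := cardG ▸ H.card_mul_index
  obtain ⟨n, hn⟩ : ∃ n, Nat.card H = n := ⟨_, rfl⟩
  rw [hn] at hlt hne hmul hdvd
  have hmem : n ∈ Nat.divisors 120 := Nat.mem_divisors.mpr ⟨hdvd, by norm_num⟩
  -- normal core facts
  set N := H.normalCore with hN
  have hHN : H.index ∣ N.index := Subgroup.index_dvd_of_le H.normalCore_le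
  have hker : N.index ∣ Nat.factorial (H.index) := by
    have h1 : N.index = Nat.card (MulAction.toPermHom G (G ⧸ H)).range := by
      rw [hN, H.normalCore_eq_ker, Subgroup.index_ker]
    have h2 : Nat.card (MulAction.toPermHom G (G ⧸ H)).range ∣
        Nat.card (Equiv.Perm (G ⧸ H)) := Subgroup.card_subgroup_dvd_card _
    rw [h1]
    calc Nat.card (MulAction.toPermHom G (G ⧸ H)).range
        ∣ Nat.card (Equiv.Perm (G ⧸ H)) := h2
      _ = Nat.factorial (Nat.card (G ⧸ H)) := card_perm_aux _
      _ = Nat.factorial H.index := by rw [← H.index_eq_card]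
  have hmulN : Nat.card N * N.index = 120 := cardG ▸ N.card_mul_index
  obtain ⟨m, hm⟩ : ∃ m, N.index = m := ⟨_, rfl⟩
  rw [hm] at hHN hker hmulN
  have hcases : n = 30 ∨ n = 40 ∨ n = 60 := by fin_cases hmem <;> omega
  rcases hcases with h30 | h40 | h60
  · -- index 4
    rw [h30] at hmul
    have hidx : H.index = 4 := by omega
    rw [hidx] at hHN hker
    have h24 : m ∣ 24 := by simpa [Nat.factorial] using hker
    have hmemN : m ∈ Nat.divisors 24 := Nat.mem_divisors.mpr ⟨h24, by norm_num⟩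
    have hc : m = 4 ∨ m = 8 ∨ m = 12 ∨ m = 24 := by fin_cases hmemN <;> omega
    rcases hc with h | h | h | h <;> rw [h] at hmulN
    · have hcN : Nat.card N = 30 := by omega
      exact core_case N 15 30 hcN (by rw [hm, h]; decide) (by rw [cardS15]; omega)
    · have hcN : Nat.card N = 15 := by omega
      exact core_case N 15 15 hcN (by rw [hm, h]; decide) (by rw [cardS15]; omega)
    · have hcN : Nat.card N = 10 := by omega
      exact core_case N 5 10 hcN (by rw [hm, h]; decide) (by rw [cardS5]; omega)
    · have hcN : Nat.card N = 5 := by omega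
      exact core_case N 5 5 hcN (by rw [hm, h]; decide) (by rw [cardS5]; omega)
  · -- index 3
    rw [h40] at hmul
    have hidx : H.index = 3 := by omega
    rw [hidx] at hHN hker
    have h6 : m ∣ 6 := by simpa [Nat.factorial] using hker
    have hmemN : m ∈ Nat.divisors 6 := Nat.mem_divisors.mpr ⟨h6, by norm_num⟩
    have hc : m = 3 ∨ m = 6 := by fin_cases hmemN <;> omega
    rcases hc with h | h <;> rw [h] at hmulN
    · have hcN : Nat.card N = 40 := by omega
      exact core_case N 20 40 hcN (by rw [hm, h]; decide) (by rw [cardS20]; omega)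
    · have hcN : Nat.card N = 20 := by omega
      exact core_case N 5 20 hcN (by rw [hm, h]; decide) (by rw [cardS5]; omega)
  · -- index 2
    rw [h60] at hmul
    have hidx : H.index = 2 := by omega
    have hsq : ∀ g : G, g ^ 2 ∈ H := Subgroup.sq_mem_of_index_two hidx
    have hsub : ∀ g ∈ (S 15) ∪ (S 15).image (fun g => s ^ 2 * g), g ∈ H := by
      have hS : ∀ g ∈ S 15, g ∈ H := by
        intro g hg
        rw [S, Finset.mem_filter] at hg
        have h16 : (g ^ 8) ^ 2 = g := by
          rw [← pow_mul]
          have h15 : g ^ 16 = g ^ 15 * g := by rw [← pow_succ]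
          rw [show 8 * 2 = 16 from rfl, h15, hg.2, one_mul]
        exact h16 ▸ hsq (g ^ 8)
      intro g hg
      rcases Finset.mem_union.mp hg with h | h
      · exact hS g h
      · obtain ⟨a, ha, rfl⟩ := Finset.mem_image.mp h
        exact H.mul_mem (hsq s) (hS a ha)
    have hcard := card_le_of_subset hsub
    rw [cardT, hn, h60] at hcard
    omega
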